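/- Two compactly supported Borel probability measures on ℂ whose (mixed) moments ∫ λ^j · conj(λ)^k dμ all agree for all nonnegative integers j, k are equal. -/

import Mathlib

open MeasureTheory Complex
open scoped BoundedContinuousFunction

/-! Both measures live on the compact set `K ∪ K'`, where the coordinate `z` is a bounded,
injective continuous function. The moments are the integrals of the monomials `z ^ j * conj z ^ k`,
which span the star subalgebra generated by `z`; since that subalgebra separates points, it
separates finite measures on a Polish space (`ext_of_forall_mem_subalgebra_integral_eq_of_polish`,
a Stone–Weierstrass argument). -/

open Submodule in
theorem StarAlgebra.adjoin_singleton_eq_span_pow_mul_star_pow {R A : Type*} [CommSemiring R]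
    [StarRing R] [CommSemiring A] [StarRing A] [Algebra R A] [StarModule R A] (a : A) :
    Subalgebra.toSubmodule (adjoin R {a}).toSubalgebra =
      span R (Set.range fun p : ℕ × ℕ => a ^ p.1 * star a ^ p.2) := by
  rw [adjoin_eq_span, Set.star_singleton, Set.singleton_union]
  congr 1
  ext b
  simp [Submonoid.mem_closure_pair]

namespace BoundedContinuousFunction

variable {X E : Type*} [TopologicalSpace X] [MeasurableSpace X] [OpensMeasurableSpace X]
  [NormedAddCommGroup E] [SecondCountableTopology E] [MeasurableSpace E] [BorelSpace E]
  {𝕜 : Type*} [RCLike 𝕜] [NormedSpace 𝕜 E] [NormedSpace ℝ E]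

theorem integral_eq_of_mem_span {μ ν : Measure X} [IsFiniteMeasure μ] [IsFiniteMeasure ν]
    {S : Set (X →ᵇ E)} (hS : ∀ f ∈ S, ∫ x, f x ∂μ = ∫ x, f x ∂ν)
    {f : X →ᵇ E} (hf : f ∈ Submodule.span 𝕜 S) : ∫ x, f x ∂μ = ∫ x, f x ∂ν := by
  induction hf using Submodule.span_induction with
  | mem f hf => exact hS f hf
  | zero => simp
  | add f g _ _ hf hg =>
    simp only [coe_add, Pi.add_apply]
    rw [integral_add (f.integrable μ) (g.integrable μ),
      integral_add (f.integrable ν) (g.integrable ν), hf, hg]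
  | smul c f _ hf => simp only [coe_smul, integral_smul, hf]

end BoundedContinuousFunction

theorem MeasureTheory.ext_of_forall_integral_pow_mul_conj_pow_eq {X 𝕜 : Type*} [RCLike 𝕜]
    [TopologicalSpace X] [PolishSpace X] [MeasurableSpace X] [BorelSpace X]
    {μ ν : Measure X} [IsFiniteMeasure μ] [IsFiniteMeasure ν]
    (g : X →ᵇ 𝕜) (hg : Function.Injective g)
    (h : ∀ j k : ℕ, ∫ x, g x ^ j * starRingEnd 𝕜 (g x) ^ k ∂μ =
      ∫ x, g x ^ j * starRingEnd 𝕜 (g x) ^ k ∂ν) :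
    μ = ν := by
  refine ext_of_forall_mem_subalgebra_integral_eq_of_polish (A := StarAlgebra.adjoin 𝕜 {g})
    (fun x y hxy =>
      ⟨_, ⟨_, ⟨g, StarAlgebra.self_mem_adjoin_singleton 𝕜 g, rfl⟩, rfl⟩, hg.ne hxy⟩)
    (fun f hf => ?_)
  have hf_span :
      f ∈ Submodule.span 𝕜 (Set.range fun p : ℕ × ℕ => g ^ p.1 * star g ^ p.2) := by
    rw [← StarAlgebra.adjoin_singleton_eq_span_pow_mul_star_pow]
    exact hf
  refine BoundedContinuousFunction.integral_eq_of_mem_span ?_ hf_span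
  rintro _ ⟨⟨j, k⟩, rfl⟩
  simpa using h j k

namespace MeasureTheory.Measure

variable {α : Type*} [MeasurableSpace α] {μ : Measure α} {s : Set α}

theorem map_comap_subtype_val_of_compl_null (hs : MeasurableSet s) (h : μ sᶜ = 0) :
    (μ.comap (Subtype.val : s → α)).map Subtype.val = μ := by
  rw [map_comap_subtype_coe hs, restrict_eq_self_of_ae_mem (mem_ae_iff.mpr h)]

theorem integral_comap_subtype_val_of_compl_null {E : Type*} [NormedAddCommGroup E]
    [NormedSpace ℝ E] (hs : MeasurableSet s) (h : μ sᶜ = 0) (f : α → E) :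
    ∫ x : s, f x ∂(μ.comap Subtype.val) = ∫ x, f x ∂μ := by
  rw [integral_subtype_comap hs, restrict_eq_self_of_ae_mem (mem_ae_iff.mpr h)]

end MeasureTheory.Measure

theorem compactly_supported_measures_eq_of_mixed_moments_eq
    (μ ν : Measure ℂ) [IsProbabilityMeasure μ] [IsProbabilityMeasure ν]
    (K K' : Set ℂ) (hK : IsCompact K) (hK' : IsCompact K')
    (hμK : μ Kᶜ = 0) (hνK : ν K'ᶜ = 0)
    (hmom : ∀ j k : ℕ,
      ∫ z, z ^ j * (starRingEnd ℂ z) ^ k ∂μ =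
        ∫ z, z ^ j * (starRingEnd ℂ z) ^ k ∂ν) :
    μ = ν := by
  set L := K ∪ K'
  have hL : IsCompact L := hK.union hK'
  have : CompactSpace L := isCompact_iff_compactSpace.mp hL
  have : PolishSpace L := hL.isClosed.polishSpace
  have hLm : MeasurableSet L := hL.isClosed.measurableSet
  have hμL : μ Lᶜ = 0 :=
    measure_mono_null (Set.compl_subset_compl.mpr Set.subset_union_left) hμK
  have hνL : ν Lᶜ = 0 :=
    measure_mono_null (Set.compl_subset_compl.mpr Set.subset_union_right) hνK
  rw [← Measure.map_comap_subtype_val_of_compl_null hLm hμL,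
    ← Measure.map_comap_subtype_val_of_compl_null hLm hνL]
  congr 1
  refine ext_of_forall_integral_pow_mul_conj_pow_eq
    (.mkOfCompact (.restrict L (.id ℂ))) Subtype.val_injective fun j k => ?_
  simp only [BoundedContinuousFunction.mkOfCompact_apply, ContinuousMap.restrict_apply,
    ContinuousMap.id_apply]
  have hmoment (m : Measure ℂ) (hmL : m Lᶜ = 0) :=
    Measure.integral_comap_subtype_val_of_compl_null hLm hmL fun z => z ^ j * starRingEnd ℂ z ^ k
  rw [hmoment μ hμL, hmoment ν hνL]
  exact hmom j k
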